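/- arXiv:2402.09321 — 3 statements merged into one kernel-verified Lean document; each statement's English description precedes it below -/
import Mathlib

section
/- Let f : ℝ≥0 → ℝ be non-decreasing and g : ℝ≥0 → ℝ satisfy g(0) = 0 and, for all 0 ≤ y ≤ z, y·(f(z) − f(y)) ≤ g(z) − g(y) ≤ z·(f(z) − f(y)). Then for all z ≥ 0, g(z) = z·f(z) − ∫₀ᶻ f(t) dt. -/
open intervalIntegral

/-- If `f` is non-decreasing on the nonnegative reals, `g 0 = 0`, and for all
`0 ≤ y ≤ z` we have `y·(f z − f y) ≤ g z − g y ≤ z·(f z − f y)`, then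
`g z = z·f z − ∫₀ᶻ f`. -/
theorem stmt_0 (f g : ℝ → ℝ)
    (hf : ∀ ⦃y z : ℝ⦄, 0 ≤ y → y ≤ z → f y ≤ f z)
    (hg0 : g 0 = 0)
    (hsand : ∀ ⦃y z : ℝ⦄, 0 ≤ y → y ≤ z →
      y * (f z - f y) ≤ g z - g y ∧ g z - g y ≤ z * (f z - f y)) :
    ∀ z : ℝ, 0 ≤ z → g z = z * f z - ∫ t in (0:ℝ)..z, f t := by
  intro z hz
  set I := ∫ t in (0:ℝ)..z, f t with hI
  have key : ∀ n : ℕ, |z * f z - g z - I| ≤ (f z - f 0) * z / ((n : ℝ) + 1) := by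
    intro n
    set N : ℝ := (n : ℝ) + 1 with hN
    have hNpos : (0:ℝ) < N := by positivity
    set x : ℕ → ℝ := fun i => (i : ℝ) * z / N with hx
    have hx0 : x 0 = 0 := by simp [hx]
    have hxn : x (n+1) = z := by
      simp only [hx, hN]; push_cast; field_simp
    have hxstep : ∀ i : ℕ, x (i+1) - x i = z / N := by
      intro i; simp only [hx]; push_cast; ring
    have hxmono : ∀ i, x i ≤ x (i+1) := by
      intro i
      have := hxstep i
      have : 0 ≤ z / N := div_nonneg hz hNpos.le
      linarith [hxstep i]
    have hxnonneg : ∀ i, 0 ≤ x i := by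
      intro i; simp only [hx]; positivity
    -- integrability on each piece
    have hInt : ∀ i : ℕ, IntervalIntegrable f MeasureTheory.volume (x i) (x (i+1)) := by
      intro i
      apply MonotoneOn.intervalIntegrable
      intro a ha b hb hab
      rw [Set.uIcc_of_le (hxmono i)] at ha hb
      exact hf (le_trans (hxnonneg i) ha.1) hab
    -- the integral splits
    have hsplit : (∑ i ∈ Finset.range (n+1), ∫ t in (x i)..(x (i+1)), f t) = I := by
      rw [intervalIntegral.sum_integral_adjacent_intervals (fun i _ => hInt i), hx0, hxn]
    -- bounds on each piece of the integral
    have hIntLow : ∀ i : ℕ, f (x i) * (z / N) ≤ ∫ t in (x i)..(x (i+1)), f t := by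
      intro i
      have h1 : ∫ t in (x i)..(x (i+1)), f (x i) ≤ ∫ t in (x i)..(x (i+1)), f t := by
        apply intervalIntegral.integral_mono_on (hxmono i) intervalIntegrable_const (hInt i)
        intro t ht
        exact hf (hxnonneg i) ht.1
      rwa [intervalIntegral.integral_const, hxstep i, smul_eq_mul, mul_comm] at h1
    have hIntHigh : ∀ i : ℕ, (∫ t in (x i)..(x (i+1)), f t) ≤ f (x (i+1)) * (z / N) := by
      intro i
      have h1 : ∫ t in (x i)..(x (i+1)), f t ≤ ∫ t in (x i)..(x (i+1)), f (x (i+1)) := by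
        apply intervalIntegral.integral_mono_on (hxmono i) (hInt i) intervalIntegrable_const
        intro t ht
        exact hf (le_trans (hxnonneg i) ht.1) ht.2
      rwa [intervalIntegral.integral_const, hxstep i, smul_eq_mul, mul_comm] at h1
    -- telescoping for g
    have hTel : (∑ i ∈ Finset.range (n+1),
        ((x (i+1) * f (x (i+1)) - g (x (i+1))) - (x i * f (x i) - g (x i))))
        = z * f z - g z := by
      rw [Finset.sum_range_sub (fun i => x i * f (x i) - g (x i)), hx0, hxn, hg0]
      ring
    have hTermLow : ∀ i : ℕ, f (x i) * (z / N) ≤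
        (x (i+1) * f (x (i+1)) - g (x (i+1))) - (x i * f (x i) - g (x i)) := by
      intro i
      have h := (hsand (hxnonneg i) (hxmono i)).2
      rw [← hxstep i]
      nlinarith [h]
    have hTermHigh : ∀ i : ℕ,
        (x (i+1) * f (x (i+1)) - g (x (i+1))) - (x i * f (x i) - g (x i))
        ≤ f (x (i+1)) * (z / N) := by
      intro i
      have h := (hsand (hxnonneg i) (hxmono i)).1
      rw [← hxstep i]
      nlinarith [h]
    -- combine
    have hSlowI : (∑ i ∈ Finset.range (n+1), f (x i) * (z / N)) ≤ I := by
      rw [← hsplit]; exact Finset.sum_le_sum fun i _ => hIntLow i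
    have hIhigh : I ≤ ∑ i ∈ Finset.range (n+1), f (x (i+1)) * (z / N) := by
      rw [← hsplit]; exact Finset.sum_le_sum fun i _ => hIntHigh i
    have hGlow : (∑ i ∈ Finset.range (n+1), f (x i) * (z / N)) ≤ z * f z - g z := by
      rw [← hTel]; exact Finset.sum_le_sum fun i _ => hTermLow i
    have hGhigh : z * f z - g z ≤ ∑ i ∈ Finset.range (n+1), f (x (i+1)) * (z / N) := by
      rw [← hTel]; exact Finset.sum_le_sum fun i _ => hTermHigh i
    have hdiff : (∑ i ∈ Finset.range (n+1), f (x (i+1)) * (z / N))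
        - (∑ i ∈ Finset.range (n+1), f (x i) * (z / N)) = (f z - f 0) * z / N := by
      rw [← Finset.sum_sub_distrib]
      have : ∀ i ∈ Finset.range (n+1),
          f (x (i+1)) * (z / N) - f (x i) * (z / N) = (f (x (i+1)) - f (x i)) * (z / N) := by
        intro i _; ring
      rw [Finset.sum_congr rfl this, ← Finset.sum_mul,
        Finset.sum_range_sub (fun i => f (x i)), hx0, hxn]
      ring
    rw [abs_le]
    constructor <;> nlinarith [hSlowI, hIhigh, hGlow, hGhigh, hdiff]
  have htend : Filter.Tendsto (fun n : ℕ => (f z - f 0) * z / ((n : ℝ) + 1))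
      Filter.atTop (nhds 0) := by
    apply Filter.Tendsto.div_atTop tendsto_const_nhds
    exact Filter.tendsto_atTop_add_const_right _ 1 tendsto_natCast_atTop_atTop
  have habs : |z * f z - g z - I| ≤ 0 := ge_of_tendsto' htend key
  have : z * f z - g z - I = 0 := by
    have := abs_nonneg (z * f z - g z - I)
    have h0 : |z * f z - g z - I| = 0 := le_antisymm habs this
    exact abs_eq_zero.mp h0
  linarith
end

section
/- Suppose X : ℝ≥0 → [0, k] and Q : ℝ≥0 → ℝ satisfy Q(0) = 0 and for all 0 ≤ y ≤ z the 'burning sandwich' inequality y·(X(z) − X(y)) ≤ Q(z) − Q(y) ≤ z·(X(z) − X(y)). Then X is non-decreasing and Q(v) = v·X(v) − ∫₀ᵛ X(t) dt for all v ≥ 0. -/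
open intervalIntegral

/-- If `X : ℝ≥0 → [0,k]` and `Q` satisfy `Q 0 = 0` and the "burning sandwich"
inequality `y·(X z − X y) ≤ Q z − Q y ≤ z·(X z − X y)` for all `0 ≤ y ≤ z`, then
`X` is non-decreasing and `Q v = v·X v − ∫₀ᵛ X`. -/
theorem stmt_5 (k : ℕ) (X Q : ℝ → ℝ)
    (hX_bdd : ∀ v : ℝ, 0 ≤ v → X v ∈ Set.Icc (0:ℝ) (k:ℝ))
    (hQ0 : Q 0 = 0)
    (hsand : ∀ ⦃y z : ℝ⦄, 0 ≤ y → y ≤ z →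
      y * (X z - X y) ≤ Q z - Q y ∧ Q z - Q y ≤ z * (X z - X y)) :
    (∀ ⦃y z : ℝ⦄, 0 ≤ y → y ≤ z → X y ≤ X z) ∧
      ∀ v : ℝ, 0 ≤ v → Q v = v * X v - ∫ t in (0:ℝ)..v, X t := by
  have mono : ∀ ⦃y z : ℝ⦄, 0 ≤ y → y ≤ z → X y ≤ X z := by
    intro y z hy hyz
    rcases eq_or_lt_of_le hyz with rfl | hlt
    · exact le_rfl
    · obtain ⟨h1, h2⟩ := hsand hy hyz
      nlinarith
  refine ⟨mono, ?_⟩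
  -- integrability of X on any [y,z] ⊆ [0,∞)
  have hint : ∀ ⦃y z : ℝ⦄, 0 ≤ y → y ≤ z → IntervalIntegrable X MeasureTheory.volume y z := by
    intro y z hy hyz
    apply MonotoneOn.intervalIntegrable
    intro a ha b hb hab
    rw [Set.uIcc_of_le hyz] at ha hb
    exact mono (le_trans hy ha.1) hab
  set F : ℝ → ℝ := fun t => t * X t - ∫ s in (0:ℝ)..t, X s with hF
  -- F satisfies the same sandwich
  have hFsand : ∀ ⦃y z : ℝ⦄, 0 ≤ y → y ≤ z →
      y * (X z - X y) ≤ F z - F y ∧ F z - F y ≤ z * (X z - X y) := by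
    intro y z hy hyz
    have hz : (0:ℝ) ≤ z := le_trans hy hyz
    have hsplit : (∫ s in (0:ℝ)..y, X s) + (∫ s in y..z, X s) = ∫ s in (0:ℝ)..z, X s :=
      integral_add_adjacent_intervals (hint le_rfl hy) (hint hy hyz)
    have hlow : (z - y) * X y ≤ ∫ s in y..z, X s := by
      have := integral_mono_on hyz (_root_.intervalIntegrable_const (c := X y)) (hint hy hyz)
        (fun t ht => mono hy ht.1)
      simpa [smul_eq_mul] using this
    have hhigh : (∫ s in y..z, X s) ≤ (z - y) * X z := by
      have := integral_mono_on hyz (hint hy hyz) (_root_.intervalIntegrable_const (c := X z))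
        (fun t ht => mono (le_trans hy ht.1) ht.2)
      simpa [smul_eq_mul] using this
    have hFz : F z - F y = z * X z - y * X y - ∫ s in y..z, X s := by
      simp only [hF]; linarith [hsplit]
    constructor <;> [nlinarith; nlinarith]
  set D : ℝ → ℝ := fun t => Q t - F t with hD
  have hDstep : ∀ ⦃y z : ℝ⦄, 0 ≤ y → y ≤ z → |D z - D y| ≤ (z - y) * (X z - X y) := by
    intro y z hy hyz
    obtain ⟨h1, h2⟩ := hsand hy hyz
    obtain ⟨h3, h4⟩ := hFsand hy hyz
    rw [abs_le]
    constructor <;> simp only [hD] <;> nlinarith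
  have hD0 : D 0 = 0 := by simp [hD, hF, hQ0]
  intro v hv
  -- telescoping bound
  have key : ∀ n : ℕ, 0 < n → ∀ i : ℕ, i ≤ n →
      |D ((i : ℝ) * v / n)| ≤ (v / n) * (X ((i : ℝ) * v / n) - X 0) := by
    intro n hn
    have hn' : (0:ℝ) < n := by exact_mod_cast hn
    intro i
    induction i with
    | zero => intro _; simp [hD0]
    | succ i ih =>
      intro hi
      have hi' : i ≤ n := le_of_lt (Nat.lt_of_succ_le hi)
      have h1 : (0:ℝ) ≤ (i : ℝ) * v / n := by positivity
      have h2 : (i : ℝ) * v / n ≤ ((i + 1 : ℕ) : ℝ) * v / n := by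
        have h : (i:ℝ) ≤ ((i+1:ℕ):ℝ) := by exact_mod_cast Nat.le_succ i
        gcongr
      have hdiff : ((i + 1 : ℕ) : ℝ) * v / n - (i : ℝ) * v / n = v / n := by
        push_cast; ring
      have hstep := hDstep h1 h2
      rw [hdiff] at hstep
      have hΔ : X ((i : ℝ) * v / n) ≤ X (((i + 1 : ℕ) : ℝ) * v / n) := mono h1 h2
      calc |D (((i + 1 : ℕ) : ℝ) * v / n)|
          ≤ |D (((i + 1 : ℕ) : ℝ) * v / n) - D ((i : ℝ) * v / n)| + |D ((i : ℝ) * v / n)| := by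
            simpa using abs_add_le (D (((i + 1 : ℕ) : ℝ) * v / n) - D ((i : ℝ) * v / n)) (D ((i : ℝ) * v / n))
        _ ≤ (v / n) * (X (((i + 1 : ℕ) : ℝ) * v / n) - X ((i : ℝ) * v / n))
              + (v / n) * (X ((i : ℝ) * v / n) - X 0) := add_le_add hstep (ih hi')
        _ = (v / n) * (X (((i + 1 : ℕ) : ℝ) * v / n) - X 0) := by ring
  have bound : ∀ n : ℕ, 0 < n → |D v| ≤ v * k / n := by
    intro n hn
    have hn' : (0:ℝ) < n := by exact_mod_cast hn
    have hv' : (n : ℝ) * v / n = v := by field_simp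
    have h := key n hn n le_rfl
    rw [hv'] at h
    have hXv := hX_bdd v hv
    have hX0 := hX_bdd 0 le_rfl
    have : (v / n) * (X v - X 0) ≤ v * k / n := by
      rw [div_mul_eq_mul_div]
      gcongr
      nlinarith [hXv.2, hX0.1]
    linarith
  have hDv : |D v| ≤ 0 := by
    have htend : Filter.Tendsto (fun n : ℕ => v * k / n) Filter.atTop (nhds 0) :=
      tendsto_const_div_atTop_nhds_zero_nat (v * k)
    refine ge_of_tendsto htend ?_
    filter_upwards [Filter.eventually_gt_atTop 0] with n hn
    exact bound n hn
  have : D v = 0 := abs_eq_zero.mp (le_antisymm hDv (abs_nonneg _))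
  have : Q v = F v := by simpa [hD, sub_eq_zero] using this
  simpa [hF] using this
end

section
/- Let x : ℝ → [0,1] and p : ℝ → ℝ be such that for all true values v and bids b, v·x(v) − p(v) ≥ v·x(b) − p(b) (incentive compatibility for a single fixed environment). Then x is non-decreasing, and for all y ≤ z: y·(x(z) − x(y)) ≤ p(z) − p(y) ≤ z·(x(z) − x(y)). -/
/-- If `(x, p)` with `x : ℝ → [0,1]` is incentive compatible against a fixed
environment (truthful bidding maximizes `v·x(b) − p(b)`), then `x` is
non-decreasing and the payment sandwich
`y·(x z − x y) ≤ p z − p y ≤ z·(x z − x y)` holds for all `y ≤ z`. -/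
theorem stmt_14 (x p : ℝ → ℝ)
    (hx_bdd : ∀ b : ℝ, x b ∈ Set.Icc (0:ℝ) 1)
    (hIC : ∀ v b : ℝ, v * x b - p b ≤ v * x v - p v) :
    Monotone x ∧
      ∀ ⦃y z : ℝ⦄, y ≤ z →
        y * (x z - x y) ≤ p z - p y ∧ p z - p y ≤ z * (x z - x y) := by
  have sandwich : ∀ ⦃y z : ℝ⦄, y ≤ z →
      y * (x z - x y) ≤ p z - p y ∧ p z - p y ≤ z * (x z - x y) := by
    intro y z _
    constructor
    · have := hIC y z; nlinarith
    · have := hIC z y; nlinarith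
  refine ⟨?_, sandwich⟩
  intro y z hyz
  rcases eq_or_lt_of_le hyz with h | h
  · simp [h]
  · have h1 := (sandwich hyz).1
    have h2 := (sandwich hyz).2
    nlinarith
end
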